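/- Let k be a field and let B ⊆ k^m (with coordinatewise operations) be a k-subalgebra containing (1,...,1). Define an equivalence relation on {1,...,m} by i ~ j iff a_i = a_j for all (a_1,...,a_m) ∈ B. Then B = {(a_1,...,a_m) ∈ k^m | a_i = a_j whenever i ~ j}; that is, every unital subalgebra of k^m is determined by a partition of the coordinate set, obtained by setting coordinates equal. -/
import Mathlib

open scoped Classical

/-- Every unital subalgebra of `k^m` over a field `k` consists exactly of the tuples that
are constant on the classes of the equivalence relation `i ~ j ↔ (∀ b ∈ B, b i = b j)`;
i.e. it is obtained from a partition of the coordinates by setting coordinates equal. -/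
theorem stmt_4 {k : Type*} [Field k] {m : ℕ} (B : Subalgebra k (Fin m → k))
    (x : Fin m → k) :
    x ∈ B ↔ ∀ i j : Fin m, (∀ b : Fin m → k, b ∈ B → b i = b j) → x i = x j := by
  constructor
  · intro hx i j h
    exact h x hx
  · intro hx
    set r : Fin m → Fin m → Prop := fun i j => ∀ b : Fin m → k, b ∈ B → b i = b j with hrdef
    -- separating elements: for every pair (i,j) an element of B with value 1 at i,
    -- and value 0 at j whenever ¬ r i j
    have sep : ∀ i j : Fin m, ∃ c : Fin m → k, c ∈ B ∧ c i = 1 ∧ (¬ r i j → c j = 0) := by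
      intro i j
      by_cases h : r i j
      · exact ⟨1, B.one_mem, rfl, fun h' => absurd h h'⟩
      · have h' : ¬ ∀ b : Fin m → k, b ∈ B → b i = b j := h
        push_neg at h'
        obtain ⟨b, hb, hij⟩ := h'
        have hne : b i - b j ≠ 0 := sub_ne_zero.mpr hij
        refine ⟨(b i - b j)⁻¹ • (b - algebraMap k (Fin m → k) (b j)), ?_, ?_, ?_⟩
        · exact B.smul_mem (B.sub_mem hb (B.algebraMap_mem _)) _
        · have : algebraMap k (Fin m → k) (b j) i = b j := rfl
          simp only [Pi.smul_apply, Pi.sub_apply, this, smul_eq_mul]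
          exact inv_mul_cancel₀ hne
        · intro _
          have : algebraMap k (Fin m → k) (b j) j = b j := rfl
          simp [Pi.smul_apply, Pi.sub_apply, this]
    choose c hcB hc1 hc0 using sep
    -- idempotent-like elements: e i ∈ B, (e i) i = 1, (e i) j = 0 if ¬ r i j
    set e : Fin m → (Fin m → k) := fun i => ∏ j : Fin m, c i j with hedef
    have heB : ∀ i, e i ∈ B := fun i => B.prod_mem fun j _ => hcB i j
    have he1 : ∀ i, e i i = 1 := by
      intro i
      have : e i i = ∏ j : Fin m, c i j i := by
        simp [hedef, Finset.prod_apply]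
      rw [this]
      exact Finset.prod_eq_one fun j _ => hc1 i j
    have he0 : ∀ i j, ¬ r i j → e i j = 0 := by
      intro i j h
      have : e i j = ∏ j' : Fin m, c i j' j := by
        simp [hedef, Finset.prod_apply]
      rw [this]
      exact Finset.prod_eq_zero (Finset.mem_univ j) (hc0 i j h)
    -- r is reflexive, symmetric, transitive
    have rrefl : ∀ i, r i i := fun i b _ => rfl
    have rsymm : ∀ i j, r i j → r j i := fun i j h b hb => (h b hb).symm
    have rtrans : ∀ i j l, r i j → r j l → r i l := fun i j l h1 h2 b hb =>
      (h1 b hb).trans (h2 b hb)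
    -- representatives
    have hnonempty : ∀ j : Fin m, (Finset.univ.filter (fun i => r i j)).Nonempty :=
      fun j => ⟨j, Finset.mem_filter.mpr ⟨Finset.mem_univ j, rrefl j⟩⟩
    set rep : Fin m → Fin m := fun j =>
      (Finset.univ.filter (fun i => r i j)).min' (hnonempty j) with hrepdef
    have hrep : ∀ j, r (rep j) j := by
      intro j
      have := (Finset.univ.filter (fun i => r i j)).min'_mem (hnonempty j)
      simpa using this
    have hrepcong : ∀ i j, r i j → rep i = rep j := by
      intro i j h
      have hset : Finset.univ.filter (fun a => r a i) = Finset.univ.filter (fun a => r a j) := by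
        ext a
        simp only [Finset.mem_filter, Finset.mem_univ, true_and]
        exact ⟨fun ha => rtrans a i j ha h, fun ha => rtrans a j i ha (rsymm i j h)⟩
      simp only [hrepdef]
      congr 1
    have hrepidem : ∀ j, rep (rep j) = rep j := fun j => hrepcong _ _ (hrep j)
    -- x = ∑ over representatives of x i • e i
    set T : Finset (Fin m) := Finset.image rep Finset.univ with hTdef
    have hxeq : x = ∑ i ∈ T, x i • e i := by
      funext j
      have hsum : (∑ i ∈ T, x i • e i) j = ∑ i ∈ T, x i * e i j := by
        rw [Finset.sum_apply]
        simp [smul_eq_mul]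
      rw [hsum]
      rw [Finset.sum_eq_single (rep j)]
      · have h1 : e (rep j) j = 1 := by
          have := hrep j (e (rep j)) (heB (rep j))
          rw [← this, he1]
        rw [h1, mul_one]
        exact (hx (rep j) j (hrep j)).symm
      · intro i hiT hne
        have hi : rep i = i := by
          obtain ⟨a, _, ha⟩ := Finset.mem_image.mp hiT
          rw [← ha, hrepidem]
        have : ¬ r i j := by
          intro h
          exact hne (by rw [← hi, hrepcong i j h])
        rw [he0 i j this, mul_zero]
      · intro h
        exact absurd (Finset.mem_image.mpr ⟨j, Finset.mem_univ j, rfl⟩) h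
    rw [hxeq]
    exact B.sum_mem fun i _ => B.smul_mem (heB i) _
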